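/- Let p ≠ q, and on ℂⁿ (n = p+q) take the signature-(p,q) Hermitian form with s = diag(-I_p, I_q). Let V be a maximal isotropic subspace, w ∈ V, v ∈ V^⊥ \ V, u ∉ V^⊥ with ⟨u,w⟩ ∈ ℝ \ {0} and 2⟨u,w⟩ + ⟨v,v⟩ = 0. Then there exists a rank-1 linear map M : (V⊕sV)^⊥ → V (extended by zero on V⊕sV) such that N = M - M* satisfies (1/2)N²(u) + N(v) + w = 0. -/

import Mathlib

open Matrix

/-- The matrix `s = diag(-I_p, I_q)` defining the signature-`(p,q)` Hermitian form on `ℂⁿ`. -/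
noncomputable def sig (p n : ℕ) : Matrix (Fin n) (Fin n) ℂ :=
  Matrix.diagonal fun i => if (i : ℕ) < p then -1 else 1

/-- The Hermitian form `⟨v,w⟩ = -∑_{i<p} v̄ᵢwᵢ + ∑_{i≥p} v̄ᵢwᵢ = v̄ᵗ s w`. -/
noncomputable def pqform (p n : ℕ) (v w : Fin n → ℂ) : ℂ :=
  star v ⬝ᵥ (sig p n *ᵥ w)

/-- The adjoint `A* = s Āᵗ s` with respect to the signature-`(p,q)` form. -/
noncomputable def pqadj (p n : ℕ) (A : Matrix (Fin n) (Fin n) ℂ) : Matrix (Fin n) (Fin n) ℂ :=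
  sig p n * Aᴴ * sig p n

/-!
Write `t = ⟨u,w⟩` and split `t⁻¹ v = a + b` with `a ∈ V` and `b` orthogonal to `V` for the
standard inner product. Since `v ∈ V^⊥` and `V` is isotropic, `b` is also `⟨·,·⟩`-orthogonal to
`V`, and it is orthogonal to `sV` because `⟨b, s x⟩ = b̄ᵗ x`. Take `M x = ⟨b,x⟩ w`; then
`M* x = ⟨w,x⟩ b`, so `N x = ⟨b,x⟩ w - ⟨w,x⟩ b` kills `w` and sends `b` to `⟨b,b⟩ w`, and the
identity reduces to the scalar relations `⟨w,u⟩⟨b,b⟩ = -2 = ⟨b,v⟩`, both consequences of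
`2⟨u,w⟩ + ⟨v,v⟩ = 0`.
-/

theorem Submodule.exists_add_eq_forall_star_dotProduct_eq_zero {𝕜 ι : Type*} [RCLike 𝕜]
    [Fintype ι] (V : Submodule 𝕜 (ι → 𝕜)) (v : ι → 𝕜) :
    ∃ a ∈ V, ∃ b, a + b = v ∧ ∀ x ∈ V, star x ⬝ᵥ b = 0 := by
  let e := WithLp.linearEquiv 2 𝕜 (ι → 𝕜)
  obtain ⟨a, ha, b, hb, hab⟩ := (V.comap e.toLinearMap).exists_add_mem_mem_orthogonal (e.symm v)
  refine ⟨e a, ha, e b, by simpa using congrArg e hab.symm, fun x hx => ?_⟩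
  have := hb (e.symm x) (by simpa using hx)
  rwa [EuclideanSpace.inner_eq_star_dotProduct, dotProduct_comm] at this

theorem Matrix.rank_vecMulVec_of_ne_zero {K m n : Type*} [Field K] [Fintype n] [DecidableEq n]
    {w : m → K} {v : n → K} (hw : w ≠ 0) (hv : v ≠ 0) : (vecMulVec w v).rank = 1 := by
  refine le_antisymm (rank_vecMulVec_le w v) (Nat.one_le_iff_ne_zero.mpr fun h => ?_)
  rw [rank, Submodule.finrank_eq_zero, LinearMap.range_eq_bot] at h
  obtain ⟨i, hi⟩ := Function.ne_iff.mp hw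
  obtain ⟨j, hj⟩ := Function.ne_iff.mp hv
  have := congr_fun (LinearMap.congr_fun h (Pi.single j 1)) i
  simp only [LinearMap.zero_apply, Pi.zero_apply, mulVecLin_apply, mulVec_single_one] at this
  simp only [col_apply, vecMulVec_apply, mul_eq_zero] at this
  exact this.elim hi hj

section SignatureForm

variable {p n : ℕ}

theorem sig_conjTranspose : (sig p n)ᴴ = sig p n := by
  rw [sig, diagonal_conjTranspose]
  congr 1
  ext i
  simp only [Pi.star_apply]
  split_ifs <;> simp

theorem sig_mul_sig : sig p n * sig p n = 1 := by
  rw [sig, diagonal_mul_diagonal, ← diagonal_one]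
  congr 1
  ext i
  split_ifs <;> simp

theorem sig_mulVec_sig_mulVec (x : Fin n → ℂ) : sig p n *ᵥ (sig p n *ᵥ x) = x := by
  rw [mulVec_mulVec, sig_mul_sig, one_mulVec]

theorem star_pqform (x y : Fin n → ℂ) : star (pqform p n x y) = pqform p n y x := by
  rw [pqform, pqform, ← star_dotProduct, star_mulVec, sig_conjTranspose, dotProduct_mulVec]

@[simp] theorem pqform_add_left (x y z : Fin n → ℂ) :
    pqform p n (x + y) z = pqform p n x z + pqform p n y z := by
  simp [pqform, add_dotProduct]

@[simp] theorem pqform_add_right (x y z : Fin n → ℂ) :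
    pqform p n x (y + z) = pqform p n x y + pqform p n x z := by
  simp [pqform, mulVec_add, dotProduct_add]

@[simp] theorem pqform_smul_left (c : ℂ) (x y : Fin n → ℂ) :
    pqform p n (c • x) y = star c * pqform p n x y := by
  simp [pqform, star_smul]

@[simp] theorem pqform_smul_right (c : ℂ) (x y : Fin n → ℂ) :
    pqform p n x (c • y) = c * pqform p n x y := by
  simp [pqform, mulVec_smul]

theorem pqform_sig_mulVec (x y : Fin n → ℂ) : pqform p n x (sig p n *ᵥ y) = star x ⬝ᵥ y := by
  rw [pqform, sig_mulVec_sig_mulVec]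

theorem exists_add_eq_of_forall_pqform_eq_zero {V : Submodule ℂ (Fin n → ℂ)}
    (hiso : ∀ x ∈ V, ∀ y ∈ V, pqform p n x y = 0) {v : Fin n → ℂ}
    (hvperp : ∀ y ∈ V, pqform p n y v = 0) :
    ∃ a ∈ V, ∃ b, a + b = v ∧ (∀ x ∈ V, star x ⬝ᵥ b = 0) ∧
      (∀ x ∈ V, pqform p n b x = 0) ∧ pqform p n b b = pqform p n v v := by
  obtain ⟨a, ha, b, rfl, hbV⟩ := V.exists_add_eq_forall_star_dotProduct_eq_zero v
  have hbperp : ∀ x ∈ V, pqform p n b x = 0 := fun x hx => by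
    have hxv := hvperp x hx
    rw [pqform_add_right, hiso x hx a ha, zero_add] at hxv
    rw [← star_pqform, hxv, star_zero]
  refine ⟨a, ha, b, rfl, hbV, hbperp, ?_⟩
  simp [hiso a ha a ha, hbperp a ha, ← star_pqform b a]

noncomputable def pqRankOne (p n : ℕ) (w b : Fin n → ℂ) : Matrix (Fin n) (Fin n) ℂ :=
  vecMulVec w (star b ᵥ* sig p n)

theorem pqRankOne_mulVec (w b x : Fin n → ℂ) : pqRankOne p n w b *ᵥ x = pqform p n b x • w := by
  rw [pqRankOne, vecMulVec_mulVec, op_smul_eq_smul, ← dotProduct_mulVec, pqform]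

theorem pqadj_pqRankOne (w b : Fin n → ℂ) :
    pqadj p n (pqRankOne p n w b) = pqRankOne p n b w := by
  rw [pqadj, pqRankOne, conjTranspose_vecMulVec, star_vecMul, star_star, sig_conjTranspose,
    mul_vecMulVec, vecMulVec_mul, sig_mulVec_sig_mulVec, pqRankOne]

theorem rank_pqRankOne {w b : Fin n → ℂ} (hw : w ≠ 0) (hb : b ≠ 0) :
    (pqRankOne p n w b).rank = 1 := by
  refine rank_vecMulVec_of_ne_zero hw fun h => hb ?_
  simpa [sig_mul_sig] using congrArg (fun y => star (y ᵥ* sig p n)) h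

theorem pqRankOne_sub_pqadj_mulVec (w b x : Fin n → ℂ) :
    (pqRankOne p n w b - pqadj p n (pqRankOne p n w b)) *ᵥ x =
      pqform p n b x • w - pqform p n w x • b := by
  rw [pqadj_pqRankOne, sub_mulVec, pqRankOne_mulVec, pqRankOne_mulVec]

theorem half_smul_sq_mulVec_add_mulVec_add_eq_zero {u v w b : Fin n → ℂ}
    (hww : pqform p n w w = 0) (hwb : pqform p n w b = 0) (hbw : pqform p n b w = 0)
    (hwu : pqform p n w u * pqform p n b b = -2) (hwv : pqform p n w v = 0)
    (hbv : pqform p n b v = -2) :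
    (1 / 2 : ℂ) • (((pqRankOne p n w b - pqadj p n (pqRankOne p n w b)) *
        (pqRankOne p n w b - pqadj p n (pqRankOne p n w b))) *ᵥ u) +
      (pqRankOne p n w b - pqadj p n (pqRankOne p n w b)) *ᵥ v + w = 0 := by
  have hN := pqRankOne_sub_pqadj_mulVec (p := p) w b
  have hNN : ((pqRankOne p n w b - pqadj p n (pqRankOne p n w b)) *
      (pqRankOne p n w b - pqadj p n (pqRankOne p n w b))) *ᵥ u = (2 : ℂ) • w := by
    rw [← mulVec_mulVec, hN u, mulVec_sub, mulVec_smul, mulVec_smul, hN, hN, hww, hbw, hwb]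
    linear_combination (norm := module) (-hwu) • w
  rw [hNN, hN, hbv, hwv]
  module

end SignatureForm

theorem stmt_17_general (p n : ℕ)
    (V : Submodule ℂ (Fin n → ℂ))
    (hiso : ∀ x ∈ V, ∀ y ∈ V, pqform p n x y = 0)
    (u v w : Fin n → ℂ)
    (hw : w ∈ V)
    (hvperp : ∀ y ∈ V, pqform p n y v = 0)
    (huw_re : ((pqform p n u w).im = 0)) (huw_ne : pqform p n u w ≠ 0)
    (hrel : 2 * pqform p n u w + pqform p n v v = 0) :
    ∃ M : Matrix (Fin n) (Fin n) ℂ,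
      M.rank = 1 ∧
      (∀ x : Fin n → ℂ, M *ᵥ x ∈ V) ∧
      (∀ x ∈ V, M *ᵥ x = 0) ∧
      (∀ x ∈ V, M *ᵥ (sig p n *ᵥ x) = 0) ∧
      (1 / 2 : ℂ) • (((M - pqadj p n M) * (M - pqadj p n M)) *ᵥ u) +
          (M - pqadj p n M) *ᵥ v + w = 0 := by
  set t := pqform p n u w
  have ht : star t = t := Complex.conj_eq_iff_im.mpr huw_re
  obtain ⟨a, ha, b, hab, hbV, hbperp, hbb⟩ :=
    exists_add_eq_of_forall_pqform_eq_zero hiso (v := t⁻¹ • v) fun y hy => by simp [hvperp y hy]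
  rw [pqform_smul_left, pqform_smul_right, star_inv₀, ht,
    show pqform p n v v = -2 * t by linear_combination hrel] at hbb
  have hw0 : w ≠ 0 := by rintro rfl; simp [t, pqform] at huw_ne
  have hb0 : b ≠ 0 := by rintro rfl; simp [pqform, huw_ne] at hbb
  refine ⟨pqRankOne p n w b, rank_pqRankOne hw0 hb0, fun x => ?_, fun x hx => ?_,
    fun x hx => ?_, ?_⟩
  · rw [pqRankOne_mulVec]; exact V.smul_mem _ hw
  · rw [pqRankOne_mulVec, hbperp x hx, zero_smul]
  · rw [pqRankOne_mulVec, pqform_sig_mulVec, star_dotProduct, hbV x hx, star_zero, zero_smul]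
  · refine half_smul_sq_mulVec_add_mulVec_add_eq_zero (hiso w hw w hw) ?_ (hbperp w hw) ?_
      (hvperp w hw) ?_
    · rw [← star_pqform, hbperp w hw, star_zero]
    · rw [← star_pqform, ht, hbb]; field_simp
    · rw [show v = t • (a + b) by rw [hab, smul_smul, mul_inv_cancel₀ huw_ne, one_smul],
        pqform_smul_right, pqform_add_right, hbperp a ha, hbb, zero_add]
      field_simp

theorem stmt_17 (p q n : ℕ) (hn : n = p + q) (hpq : p ≠ q)
    (V : Submodule ℂ (Fin n → ℂ))
    (hiso : ∀ x ∈ V, ∀ y ∈ V, pqform p n x y = 0)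
    (hmax : ∀ W : Submodule ℂ (Fin n → ℂ),
      V ≤ W → (∀ x ∈ W, ∀ y ∈ W, pqform p n x y = 0) → W = V)
    (u v w : Fin n → ℂ)
    (hw : w ∈ V)
    (hvperp : ∀ y ∈ V, pqform p n y v = 0) (hvnotV : v ∉ V)
    (hu : ¬ (∀ y ∈ V, pqform p n y u = 0))
    (huw_re : ((pqform p n u w).im = 0)) (huw_ne : pqform p n u w ≠ 0)
    (hrel : 2 * pqform p n u w + pqform p n v v = 0) :
    ∃ M : Matrix (Fin n) (Fin n) ℂ,
      M.rank = 1 ∧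
      (∀ x : Fin n → ℂ, M *ᵥ x ∈ V) ∧
      (∀ x ∈ V, M *ᵥ x = 0) ∧
      (∀ x ∈ V, M *ᵥ (sig p n *ᵥ x) = 0) ∧
      (1 / 2 : ℂ) • (((M - pqadj p n M) * (M - pqadj p n M)) *ᵥ u) +
          (M - pqadj p n M) *ᵥ v + w = 0 :=
  stmt_17_general p n V hiso u v w hw hvperp huw_re huw_ne hrel
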